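/- Let G_N be the Grover matrix for N ≥ 2 and let t_G(N) = ⌊π·√N/4⌋. Then the amplitude of the solution state after t_G(N) Grover iterations starting from the non-solution state tends to 1: lim_{N→∞} (G_N^{t_G(N)} · (0, 1)ᵀ)₁ = 1, where (·)₁ denotes the first coordinate. (The Grover algorithm succeeds with negligible error after ⌊π√N/4⌋ iterations for large N.) -/

import Mathlib

/-!
Writing `sin θ_N = 1/√N`, the Grover matrix is the rotation by the angle `2 θ_N`, so after
`k` iterations the solution amplitude is `sin (2 k θ_N)`. Since `θ_N ~ 1/√N`, the angle
`2 ⌊π√N/4⌋ θ_N` tends to `π/2`, and its sine to `1`.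
-/

open Matrix Real Filter

/-- The 2×2 Grover matrix. -/
noncomputable def GroverM (N : ℕ) : Matrix (Fin 2) (Fin 2) ℝ :=
  !![1 - 2 / (N : ℝ), 2 * Real.sqrt ((N : ℝ) - 1) / (N : ℝ);
     -(2 * Real.sqrt ((N : ℝ) - 1) / (N : ℝ)), 1 - 2 / (N : ℝ)]

open Topology

noncomputable def rotationMatrix (θ : ℝ) : Matrix (Fin 2) (Fin 2) ℝ :=
  !![cos θ, sin θ; -sin θ, cos θ]

lemma rotationMatrix_zero : rotationMatrix 0 = 1 := by
  ext i j
  fin_cases i <;> fin_cases j <;> simp [rotationMatrix]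

lemma rotationMatrix_mul (a b : ℝ) :
    rotationMatrix a * rotationMatrix b = rotationMatrix (a + b) := by
  ext i j
  fin_cases i <;> fin_cases j <;>
    simp [rotationMatrix, mul_apply, Fin.sum_univ_two, cos_add, sin_add] <;> ring

lemma rotationMatrix_pow (θ : ℝ) (n : ℕ) : rotationMatrix θ ^ n = rotationMatrix (n * θ) := by
  induction n with
  | zero => simp [rotationMatrix_zero]
  | succ n ih => rw [pow_succ, ih, rotationMatrix_mul]; push_cast; ring_nf

lemma rotationMatrix_mulVec_apply_zero (θ : ℝ) : (rotationMatrix θ *ᵥ ![0, 1]) 0 = sin θ := by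
  simp [rotationMatrix, mulVec, dotProduct, Fin.sum_univ_two]

lemma cos_two_mul_arcsin {x : ℝ} (hx₁ : -1 ≤ x) (hx₂ : x ≤ 1) :
    cos (2 * arcsin x) = 1 - 2 * x ^ 2 := by
  rw [cos_two_mul, cos_arcsin, sq_sqrt (by nlinarith)]
  ring

lemma sin_two_mul_arcsin {x : ℝ} (hx₁ : -1 ≤ x) (hx₂ : x ≤ 1) :
    sin (2 * arcsin x) = 2 * x * √(1 - x ^ 2) := by
  rw [sin_two_mul, sin_arcsin hx₁ hx₂, cos_arcsin, mul_assoc]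

lemma tendsto_arcsin_div_self : Tendsto (fun x => arcsin x / x) (𝓝[≠] 0) (𝓝 1) := by
  have h := hasDerivAt_iff_tendsto_slope_zero.mp
    (by simpa using hasDerivAt_arcsin (x := 0) (by norm_num) (by norm_num))
  simpa [div_eq_inv_mul] using h

noncomputable def groverAngle (N : ℕ) : ℝ := arcsin (√N)⁻¹

lemma groverM_eq_rotationMatrix {N : ℕ} (hN : 0 < N) :
    GroverM N = rotationMatrix (2 * groverAngle N) := by
  have hN' : (1 : ℝ) ≤ N := by exact_mod_cast hN
  have hx₀ : 0 ≤ (√N)⁻¹ := by positivity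
  have hx₁ : (√N)⁻¹ ≤ 1 := inv_le_one_of_one_le₀ (one_le_sqrt.mpr hN')
  have hx_sq : (√N)⁻¹ ^ 2 = (N : ℝ)⁻¹ := by rw [inv_pow, sq_sqrt (by positivity)]
  have hcos : cos (2 * groverAngle N) = 1 - 2 / N := by
    rw [groverAngle, cos_two_mul_arcsin (by linarith) hx₁, hx_sq, div_eq_mul_inv]
  have hsin : sin (2 * groverAngle N) = 2 * √(N - 1) / N := by
    have hN₀ : (0 : ℝ) < N := by linarith
    rw [groverAngle, sin_two_mul_arcsin (by linarith) hx₁, hx_sq,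
      show 1 - (N : ℝ)⁻¹ = (N - 1) / N by field_simp, sqrt_div' _ hN₀.le]
    field_simp
    rw [sq_sqrt hN₀.le]
  rw [GroverM, rotationMatrix, hcos, hsin]

lemma groverM_pow_mulVec_apply_zero {N : ℕ} (hN : 0 < N) (k : ℕ) :
    (GroverM N ^ k *ᵥ ![0, 1]) 0 = sin (k * (2 * groverAngle N)) := by
  rw [groverM_eq_rotationMatrix hN, rotationMatrix_pow, rotationMatrix_mulVec_apply_zero]

lemma tendsto_sqrt_natCast_atTop : Tendsto (fun N : ℕ => √(N : ℝ)) atTop atTop :=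
  tendsto_sqrt_atTop.comp tendsto_natCast_atTop_atTop

lemma tendsto_sqrt_mul_groverAngle :
    Tendsto (fun N : ℕ => √N * groverAngle N) atTop (𝓝 1) := by
  have hx : Tendsto (fun N : ℕ => (√N)⁻¹) atTop (𝓝[≠] 0) :=
    (tendsto_inv_atTop_nhdsGT_zero.comp tendsto_sqrt_natCast_atTop).mono_right
      (nhdsGT_le_nhdsNE 0)
  refine (tendsto_arcsin_div_self.comp hx).congr fun N => ?_
  simp only [Function.comp_apply, div_inv_eq_mul, groverAngle, mul_comm]

lemma tendsto_groverIterations_mul_groverAngle :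
    Tendsto (fun N : ℕ => (⌊π * √N / 4⌋₊ : ℝ) * (2 * groverAngle N)) atTop (𝓝 (π / 2)) := by
  have hu : Tendsto (fun N : ℕ => π * √N / 4) atTop atTop :=
    (tendsto_sqrt_natCast_atTop.const_mul_atTop pi_pos).atTop_div_const (by norm_num)
  have h := ((tendsto_nat_floor_div_atTop.comp hu).mul tendsto_sqrt_mul_groverAngle).const_mul
    (π / 2)
  rw [mul_one, mul_one] at h
  refine h.congr' ?_
  filter_upwards [eventually_gt_atTop 0] with N hN
  simp only [Function.comp_apply]
  field_simp
  ring

theorem grover_success :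
    Tendsto
      (fun N : ℕ =>
        ((GroverM N ^ ⌊Real.pi * Real.sqrt N / 4⌋₊).mulVec ![0, 1]) 0)
      atTop (nhds 1) := by
  have hsin := (continuous_sin.tendsto _).comp tendsto_groverIterations_mul_groverAngle
  rw [sin_pi_div_two] at hsin
  refine hsin.congr' ?_
  filter_upwards [eventually_gt_atTop 0] with N hN
  exact (groverM_pow_mulVec_apply_zero hN _).symm
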